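/- arXiv:2601.17294 — 3 statements merged into one kernel-verified Lean document; each statement's English description precedes it below -/
import Mathlib

section
/- Let t, s, d, k be positive integers with 1 ≤ k ≤ d. Let D be a finite set of k-dimensional linear subspaces of ℝ^d with positive weights {ω_V}_{V∈D}, set Ω := ∑_{V∈D} ω_V, and assume {(V, ω_V)}_{V∈D} is a tight t-fusion frame. For each V ∈ D, let Y_V be a finite set of unit vectors in V with positive weights {λ_{V,z}}_{z∈Y_V}, assume Λ := ∑_{z∈Y_V} λ_{V,z} is independent of V, and assume each (Y_V, {λ_{V,z}}) is a weighted spherical s-design on the unit sphere of V, in the equivalent moment form: for every y ∈ ℝ^d and every integer 0 ≤ m ≤ s, ∑_{z∈Y_V} λ_{V,z} ⟨z, P_V y⟩^m equals Λ·((1/2)_{m/2}/(k/2)_{m/2})·‖P_V y‖^m when m is even and equals 0 when m is odd. Set r := min{s, 2t+1}. Then for every y ∈ ℝ^d and every integer 0 ≤ ℓ ≤ r, ∑_{V∈D} ∑_{z∈Y_V} ω_V λ_{V,z} ⟨z, y⟩^ℓ equals Ω·Λ·((1/2)_{ℓ/2}/(d/2)_{ℓ/2})·‖y‖^ℓ when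 ℓ is even and equals 0 when ℓ is odd; that is, the weighted union Z := ⋃_{V∈D} Y_V with weights w(z) := ∑_{V∈D, z∈Y_V} ω_V λ_{V,z} is a weighted spherical r-design on S^{d−1}. -/
/-!
Each `z ∈ Y_V` lies in `V`, so `⟪z, y⟫ = ⟪z, P_V y⟫` and the design property of `Y_V` turns the
degree-`2m` moment of the union into `Λ (1/2)_m / (k/2)_m · ∑ ω_V ‖P_V y‖^{2m}`, while odd moments
vanish already on each `Y_V`. It remains to see that a tight `t`-fusion frame is a tight
`m`-fusion frame with bound `Ω (k/2)_m / (d/2)_m` for every `m ≤ t`. Applying the Laplacian to the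
frame identity in degree `2(m+1)`, with `Δ ‖P_V y‖^{2(m+1)} = 2(m+1)(k+2m) ‖P_V y‖^{2m}`, gives
tightness in degree `2m` with bound multiplied by `(d+2m)/(k+2m)`; since the bound in degree `0`
is `Ω`, the bounds are `Ω ∏_{i<m} (k+2i)/(d+2i)`.
-/

open scoped RealInnerProductSpace BigOperators

noncomputable def proj {d : ℕ} (V : Submodule ℝ (EuclideanSpace ℝ (Fin d))) :
    EuclideanSpace ℝ (Fin d) →ₗ[ℝ] EuclideanSpace ℝ (Fin d) :=
  V.subtype ∘ₗ (V.orthogonalProjectionOnto).toLinearMap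

/-- The Pochhammer symbol `(a)_n = a(a+1)⋯(a+n−1)`. -/
noncomputable def poch (a : ℝ) (n : ℕ) : ℝ := (ascPochhammer ℝ n).eval a

open Polynomial

theorem poch_succ (a : ℝ) (n : ℕ) : poch a (n + 1) = poch a n * (a + n) :=
  ascPochhammer_succ_eval n a

theorem poch_pos {a : ℝ} (ha : 0 < a) (n : ℕ) : 0 < poch a n := ascPochhammer_pos n a ha

theorem coeff_two_quadratic_pow (a b c : ℝ) (n : ℕ) :
    2 * ((C a + C b * X + C c * X ^ 2) ^ (n + 1)).coeff 2
      = (n + 1) * (2 * a ^ n * c + n * a ^ (n - 1) * b ^ 2) := by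
  have h : (derivative^[2] ((C a + C b * X + C c * X ^ 2) ^ (n + 1))).eval 0
      = (n + 1) * (2 * a ^ n * c + n * a ^ (n - 1) * b ^ 2) := by
    simp [derivative_pow]
    ring
  rw [← h, ← coeff_zero_eq_eval_zero, coeff_iterate_derivative]
  simp

section Projection

variable {d : ℕ} (V : Submodule ℝ (EuclideanSpace ℝ (Fin d))) (x y : EuclideanSpace ℝ (Fin d))

theorem proj_eq_starProjection : proj V = V.starProjection.toLinearMap := rfl

theorem proj_top : proj ⊤ x = x := by
  simp [proj_eq_starProjection, Submodule.starProjection_top]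

theorem proj_mem : proj V x ∈ V := V.starProjection_apply_mem x

theorem inner_proj_right_of_mem {z : EuclideanSpace ℝ (Fin d)} (hz : z ∈ V) :
    ⟪z, proj V y⟫ = ⟪z, y⟫ := by
  rw [proj_eq_starProjection, ContinuousLinearMap.coe_coe,
    ← V.inner_starProjection_left_eq_right, V.starProjection_eq_self_iff.mpr hz]

theorem norm_proj_sq : ‖proj V x‖ ^ 2 = ⟪x, proj V x⟫ := by
  rw [← real_inner_self_eq_norm_sq, inner_proj_right_of_mem V x (proj_mem V x), real_inner_comm]

theorem trace_proj : LinearMap.trace ℝ _ (proj V) = Module.finrank ℝ V :=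
  LinearMap.IsProj.trace ⟨proj_mem V, fun _ hx => V.starProjection_eq_self_iff.mpr hx⟩

theorem sum_norm_proj_single_sq :
    ∑ i, ‖proj V (EuclideanSpace.single i 1)‖ ^ 2 = Module.finrank ℝ V := by
  rw [← trace_proj, LinearMap.trace_eq_sum_inner _ (EuclideanSpace.basisFun (Fin d) ℝ)]
  simp [norm_proj_sq]

theorem sum_inner_single_sq : ∑ i, ⟪x, EuclideanSpace.single i 1⟫ ^ 2 = ‖x‖ ^ 2 := by
  simpa using (EuclideanSpace.basisFun (Fin d) ℝ).sum_sq_inner_left x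

end Projection

section Laplacian

variable {d : ℕ} (V : Submodule ℝ (EuclideanSpace ℝ (Fin d))) (y : EuclideanSpace ℝ (Fin d))

/- The Laplacian of `f` at `y` is `∑ i, 2 · [ε²] f (y + ε eᵢ)`; for `f = ‖P_V ·‖^{2(n+1)}` the
coefficient is read off the polynomial `ε ↦ ‖P_V (y + ε v)‖²` raised to the power `n + 1`. -/
noncomputable def normSqProjLine (v : EuclideanSpace ℝ (Fin d)) : ℝ[X] :=
  C (‖proj V y‖ ^ 2) + C (2 * ⟪proj V y, v⟫) * X + C (‖proj V v‖ ^ 2) * X ^ 2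

theorem eval_normSqProjLine (v : EuclideanSpace ℝ (Fin d)) (ε : ℝ) :
    (normSqProjLine V y v).eval ε = ‖proj V (y + ε • v)‖ ^ 2 := by
  rw [normSqProjLine, map_add, map_smul, norm_add_sq_real, inner_smul_right, norm_smul,
    Real.norm_eq_abs, mul_pow, sq_abs, inner_proj_right_of_mem V _ (proj_mem V y)]
  simp only [eval_add, eval_mul, eval_C, eval_X, eval_pow]
  ring

theorem sum_coeff_two_normSqProjLine_pow (n : ℕ) :
    ∑ i, (normSqProjLine V y (EuclideanSpace.single i 1) ^ (n + 1)).coeff 2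
      = (n + 1) * (Module.finrank ℝ V + 2 * n) * ‖proj V y‖ ^ (2 * n) := by
  have hb : ∑ i, (2 * ⟪proj V y, EuclideanSpace.single i (1 : ℝ)⟫) ^ 2
      = 4 * ‖proj V y‖ ^ 2 := by
    simp only [mul_pow, ← Finset.mul_sum, sum_inner_single_sq]
    norm_num
  have hpow : n * (‖proj V y‖ ^ 2) ^ (n - 1) * ‖proj V y‖ ^ 2 = n * (‖proj V y‖ ^ 2) ^ n := by
    rcases n with _ | n
    · simp
    · rw [Nat.add_sub_cancel, mul_assoc, ← pow_succ]
  have h : 2 * ∑ i, (normSqProjLine V y (EuclideanSpace.single i 1) ^ (n + 1)).coeff 2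
      = (n + 1) * (2 * (‖proj V y‖ ^ 2) ^ n * Module.finrank ℝ V
          + n * (‖proj V y‖ ^ 2) ^ (n - 1) * (4 * ‖proj V y‖ ^ 2)) := by
    rw [← sum_norm_proj_single_sq, ← hb, Finset.mul_sum, Finset.mul_sum, Finset.mul_sum,
      ← Finset.sum_add_distrib, Finset.mul_sum]
    simp only [normSqProjLine, coeff_two_quadratic_pow]
  rw [pow_mul]
  linear_combination h / 2 + 2 * (n + 1) * hpow

end Laplacian

section TightFusionFrame

variable {d k : ℕ} {D : Finset (Submodule ℝ (EuclideanSpace ℝ (Fin d)))}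
  {ω : Submodule ℝ (EuclideanSpace ℝ (Fin d)) → ℝ}

variable (D ω) in
def IsTightFusionFrame (t : ℕ) (A : ℝ) : Prop :=
  ∀ x : EuclideanSpace ℝ (Fin d), ∑ V ∈ D, ω V * ‖proj V x‖ ^ (2 * t) = A * ‖x‖ ^ (2 * t)

theorem isTightFusionFrame_zero : IsTightFusionFrame D ω 0 (∑ V ∈ D, ω V) := by
  intro x
  simp

theorem IsTightFusionFrame.bound_eq {t : ℕ} {A B : ℝ} (hA : IsTightFusionFrame D ω t A)
    (hB : IsTightFusionFrame D ω t B) (hd : 0 < d) : A = B := by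
  simpa using (hA (EuclideanSpace.single ⟨0, hd⟩ 1)).symm.trans (hB _)

theorem IsTightFusionFrame.laplacian {n : ℕ} {B : ℝ} (h : IsTightFusionFrame D ω (n + 1) B)
    (y : EuclideanSpace ℝ (Fin d)) :
    ∑ V ∈ D, ω V * (Module.finrank ℝ V + 2 * n) * ‖proj V y‖ ^ (2 * n)
      = B * (d + 2 * n) * ‖y‖ ^ (2 * n) := by
  have hpoly : ∑ V ∈ D, C (ω V) * ∑ i, normSqProjLine V y (EuclideanSpace.single i 1) ^ (n + 1)
      = C B * ∑ i, normSqProjLine ⊤ y (EuclideanSpace.single i 1) ^ (n + 1) := by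
    refine Polynomial.funext fun ε => ?_
    simp only [eval_finsetSum, eval_mul, eval_C, eval_pow, eval_normSqProjLine, proj_top,
      ← pow_mul, Finset.mul_sum]
    rw [Finset.sum_comm]
    exact Finset.sum_congr rfl fun i _ => h _
  have hcoeff := congrArg (coeff · 2) hpoly
  simp only [finsetSum_coeff, coeff_C_mul, sum_coeff_two_normSqProjLine_pow, proj_top,
    finrank_top, finrank_euclideanSpace_fin] at hcoeff
  have hfactor : ∑ V ∈ D, ω V * ((n + 1) * (Module.finrank ℝ V + 2 * n) * ‖proj V y‖ ^ (2 * n))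
      = (n + 1) * ∑ V ∈ D, ω V * (Module.finrank ℝ V + 2 * n) * ‖proj V y‖ ^ (2 * n) := by
    rw [Finset.mul_sum]
    exact Finset.sum_congr rfl fun _ _ => by ring
  rw [hfactor] at hcoeff
  refine mul_left_cancel₀ (by positivity : (n + 1 : ℝ) ≠ 0) ?_
  linear_combination hcoeff

theorem IsTightFusionFrame.pred {n : ℕ} {B : ℝ} (h : IsTightFusionFrame D ω (n + 1) B)
    (hdim : ∀ V ∈ D, Module.finrank ℝ V = k) (hk : 0 < k) :
    IsTightFusionFrame D ω n (B * (d + 2 * n) / (k + 2 * n)) := by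
  intro y
  have hlap := h.laplacian y
  rw [Finset.sum_congr rfl fun V hV => by rw [hdim V hV, mul_right_comm], ← Finset.sum_mul]
    at hlap
  field_simp
  linear_combination hlap

theorem IsTightFusionFrame.exists_of_le {t m : ℕ} {A : ℝ} (h : IsTightFusionFrame D ω t A)
    (hdim : ∀ V ∈ D, Module.finrank ℝ V = k) (hk : 0 < k) (hmt : m ≤ t) :
    ∃ B, IsTightFusionFrame D ω m B := by
  induction hmt using Nat.decreasingInduction with
  | self => exact ⟨A, h⟩
  | of_succ n _ ih =>
    obtain ⟨B, hB⟩ := ih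
    exact ⟨_, hB.pred hdim hk⟩

theorem IsTightFusionFrame.of_le {t m : ℕ} {A : ℝ} (h : IsTightFusionFrame D ω t A)
    (hdim : ∀ V ∈ D, Module.finrank ℝ V = k) (hk : 0 < k) (hd : 0 < d) (hmt : m ≤ t) :
    IsTightFusionFrame D ω m ((∑ V ∈ D, ω V) * (poch (k / 2) m / poch (d / 2) m)) := by
  induction m with
  | zero => simpa [poch] using isTightFusionFrame_zero
  | succ m ih =>
    obtain ⟨B, hB⟩ := h.exists_of_le hdim hk hmt
    have hBm := (hB.pred hdim hk).bound_eq (ih (by omega)) hd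
    have hpk := poch_pos (by positivity : (0 : ℝ) < k / 2) m
    have hpd := poch_pos (by positivity : (0 : ℝ) < d / 2) m
    rw [poch_succ, poch_succ]
    convert hB using 1
    field_simp at hBm ⊢
    linear_combination -hBm

end TightFusionFrame

theorem stmt1_general (t s d k : ℕ) (hk : 0 < k) (hkd : k ≤ d)
    (D : Finset (Submodule ℝ (EuclideanSpace ℝ (Fin d))))
    (hdim : ∀ V ∈ D, Module.finrank ℝ V = k)
    (ω : Submodule ℝ (EuclideanSpace ℝ (Fin d)) → ℝ)
    (Ω : ℝ) (hΩ : Ω = ∑ V ∈ D, ω V)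
    (htff : ∃ A : ℝ, 0 < A ∧ ∀ x : EuclideanSpace ℝ (Fin d),
      ∑ V ∈ D, ω V * ‖proj V x‖ ^ (2 * t) = A * ‖x‖ ^ (2 * t))
    (Y : Submodule ℝ (EuclideanSpace ℝ (Fin d)) → Finset (EuclideanSpace ℝ (Fin d)))
    (hY : ∀ V ∈ D, ∀ z ∈ Y V, z ∈ V ∧ ‖z‖ = 1)
    (lam : Submodule ℝ (EuclideanSpace ℝ (Fin d)) → EuclideanSpace ℝ (Fin d) → ℝ)
    (Λ : ℝ)
    (hdesign : ∀ V ∈ D, ∀ y : EuclideanSpace ℝ (Fin d), ∀ m : ℕ, m ≤ s →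
      ∑ z ∈ Y V, lam V z * ⟪z, proj V y⟫ ^ m =
        if Even m then
          Λ * (poch (1 / 2) (m / 2) / poch ((k : ℝ) / 2) (m / 2)) * ‖proj V y‖ ^ m
        else 0) :
    ∀ y : EuclideanSpace ℝ (Fin d), ∀ l : ℕ, l ≤ min s (2 * t + 1) →
      ∑ V ∈ D, ∑ z ∈ Y V, ω V * lam V z * ⟪z, y⟫ ^ l =
        if Even l then
          Ω * Λ * (poch (1 / 2) (l / 2) / poch ((d : ℝ) / 2) (l / 2)) * ‖y‖ ^ l
        else 0 := by
  obtain ⟨A, -, hA⟩ := htff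
  intro y l hl
  have hfactor : ∀ V ∈ D, ∑ z ∈ Y V, ω V * lam V z * ⟪z, y⟫ ^ l
      = ω V * ∑ z ∈ Y V, lam V z * ⟪z, proj V y⟫ ^ l := fun V hV => by
    rw [Finset.mul_sum]
    exact Finset.sum_congr rfl fun z hz => by
      rw [inner_proj_right_of_mem V y (hY V hV z hz).1, mul_assoc]
  rw [Finset.sum_congr rfl hfactor,
    Finset.sum_congr rfl fun V hV => by rw [hdesign V hV y l (by omega)]]
  split_ifs with hl_even
  · obtain ⟨m, rfl⟩ := hl_even.two_dvd
    have hmoment := IsTightFusionFrame.of_le hA hdim hk (by omega) (by omega : m ≤ t) y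
    have hpk := poch_pos (by positivity : (0 : ℝ) < k / 2) m
    simp only [Nat.mul_div_cancel_left m two_pos, mul_left_comm (ω _), ← Finset.mul_sum,
      hmoment, hΩ]
    field_simp
  · simp

/-- Theorem: lifting weighted spherical designs through a tight
`t`-fusion frame.  Given a tight `t`-fusion frame `{(V, ω_V)}_{V ∈ D}` on `G_{k,d}`
with `Ω = ∑ ω_V`, and for each `V ∈ D` a weighted spherical `s`-design
`(Y_V, {λ_{V,z}})` on the unit sphere of `V` (in moment form) with common total
weight `Λ`, the weighted union satisfies the spherical design moment identities on
`S^{d−1}` up to degree `r = min {s, 2t+1}`, i.e. is a weighted spherical `r`-design. -/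
theorem stmt1 (t s d k : ℕ) (ht : 0 < t) (hs : 0 < s) (hk : 0 < k) (hkd : k ≤ d)
    (D : Finset (Submodule ℝ (EuclideanSpace ℝ (Fin d))))
    (hdim : ∀ V ∈ D, Module.finrank ℝ V = k)
    (ω : Submodule ℝ (EuclideanSpace ℝ (Fin d)) → ℝ)
    (hω : ∀ V ∈ D, 0 < ω V)
    (Ω : ℝ) (hΩ : Ω = ∑ V ∈ D, ω V)
    (htff : ∃ A : ℝ, 0 < A ∧ ∀ x : EuclideanSpace ℝ (Fin d),
      ∑ V ∈ D, ω V * ‖proj V x‖ ^ (2 * t) = A * ‖x‖ ^ (2 * t))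
    (Y : Submodule ℝ (EuclideanSpace ℝ (Fin d)) → Finset (EuclideanSpace ℝ (Fin d)))
    (hY : ∀ V ∈ D, ∀ z ∈ Y V, z ∈ V ∧ ‖z‖ = 1)
    (lam : Submodule ℝ (EuclideanSpace ℝ (Fin d)) → EuclideanSpace ℝ (Fin d) → ℝ)
    (hlam : ∀ V ∈ D, ∀ z ∈ Y V, 0 < lam V z)
    (Λ : ℝ) (hΛ : ∀ V ∈ D, ∑ z ∈ Y V, lam V z = Λ)
    (hdesign : ∀ V ∈ D, ∀ y : EuclideanSpace ℝ (Fin d), ∀ m : ℕ, m ≤ s →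
      ∑ z ∈ Y V, lam V z * ⟪z, proj V y⟫ ^ m =
        if Even m then
          Λ * (poch (1 / 2) (m / 2) / poch ((k : ℝ) / 2) (m / 2)) * ‖proj V y‖ ^ m
        else 0) :
    ∀ y : EuclideanSpace ℝ (Fin d), ∀ l : ℕ, l ≤ min s (2 * t + 1) →
      ∑ V ∈ D, ∑ z ∈ Y V, ω V * lam V z * ⟪z, y⟫ ^ l =
        if Even l then
          Ω * Λ * (poch (1 / 2) (l / 2) / poch ((d : ℝ) / 2) (l / 2)) * ‖y‖ ^ l
        else 0 :=
  stmt1_general t s d k hk hkd D hdim ω Ω hΩ htff Y hY lam Λ hdesign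
end

section
/- Let d be a positive integer and let a, b be integers with 1 ≤ a ≤ b and a + b ≤ d. Then for every W ∈ O^{(d)}_{a,b}, the number of tuples τ ∈ T^{(d)}_{a,b} with W_τ = W equals 4 if a < b, and equals 8 if a = b. -/
open scoped BigOperators

noncomputable def uvec {d : ℕ} (A : Finset (Fin d)) (ε : Fin d → ℝ) :
    EuclideanSpace ℝ (Fin d) :=
  (Real.sqrt A.card)⁻¹ • ∑ i ∈ A, ε i • (EuclideanSpace.single i (1 : ℝ))

def IsSign {d : ℕ} (A : Finset (Fin d)) (ε : Fin d → ℝ) : Prop :=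
  ∀ i, if i ∈ A then (ε i = 1 ∨ ε i = -1) else ε i = 1

def IsIndex (d a b : ℕ) (A B : Finset (Fin d)) (ε δ : Fin d → ℝ) : Prop :=
  Disjoint A B ∧ A.card = a ∧ B.card = b ∧ IsSign A ε ∧ IsSign B δ

noncomputable def Wspan {d : ℕ} (A B : Finset (Fin d)) (ε δ : Fin d → ℝ) :
    Submodule ℝ (EuclideanSpace ℝ (Fin d)) :=
  Submodule.span ℝ {uvec A ε, uvec B δ}

def orbitSet (d a b : ℕ) : Set (Submodule ℝ (EuclideanSpace ℝ (Fin d))) :=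
  {W | ∃ A B ε δ, IsIndex d a b A B ε δ ∧ W = Wspan A B ε δ}

/-!
A unit sign vector `u_{C,γ}` with `|C| < a + b` lying in `span(u_{A,ε}, v_{B,δ})` is `±u_{A,ε}` or
`±v_{B,δ}`: since `A` and `B` are disjoint, a combination with both coefficients nonzero is
supported on all of `A ∪ B`, and a multiple of a `±1` vector that is again `±1` on the same support
is that vector up to sign. So a tuple with the same span as `(A, B, ε, δ)` arises from it by
flipping `ε` and `δ`, and, when `a = b` only, by swapping the two halves: 4 resp. 8 tuples.
-/

-- Outside `A` the value is `1`, the normalisation demanded by `IsSign`.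
def negOn {d : ℕ} (A : Finset (Fin d)) (ε : Fin d → ℝ) : Fin d → ℝ :=
  fun i => if i ∈ A then -ε i else 1

def signFlips {d : ℕ} (A B : Finset (Fin d)) (ε δ : Fin d → ℝ) :
    Set (Finset (Fin d) × Finset (Fin d) × (Fin d → ℝ) × (Fin d → ℝ)) :=
  {A} ×ˢ {B} ×ˢ {ε, negOn A ε} ×ˢ {δ, negOn B δ}

def fiber (d a b : ℕ) (W : Submodule ℝ (EuclideanSpace ℝ (Fin d))) :
    Set (Finset (Fin d) × Finset (Fin d) × (Fin d → ℝ) × (Fin d → ℝ)) :=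
  {q | IsIndex d a b q.1 q.2.1 q.2.2.1 q.2.2.2 ∧ Wspan q.1 q.2.1 q.2.2.1 q.2.2.2 = W}

section

variable {d : ℕ} {A B C : Finset (Fin d)} {ε δ γ : Fin d → ℝ}

namespace IsSign

lemma eq_one_or_eq_neg_one (h : IsSign A ε) {i : Fin d} (hi : i ∈ A) :
    ε i = 1 ∨ ε i = -1 := by
  simpa [hi] using h i

lemma eq_one_of_notMem (h : IsSign A ε) {i : Fin d} (hi : i ∉ A) : ε i = 1 := by
  simpa [hi] using h i

lemma ne_zero (h : IsSign A ε) {i : Fin d} (hi : i ∈ A) : ε i ≠ 0 := by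
  rcases h.eq_one_or_eq_neg_one hi with h1 | h1 <;> simp [h1]

lemma ne_negOn (h : IsSign A ε) (hA : A.Nonempty) : ε ≠ negOn A ε := by
  obtain ⟨i, hi⟩ := hA
  intro hε
  have := congrFun hε i
  simp only [negOn, if_pos hi] at this
  exact h.ne_zero hi (by linarith)

lemma eq_or_eq_negOn_of_forall_eq_mul (hγ : IsSign A γ) (hε : IsSign A ε) (hA : A.Nonempty)
    {s : ℝ} (h : ∀ i ∈ A, γ i = s * ε i) : γ = ε ∨ γ = negOn A ε := by
  obtain ⟨i₀, hi₀⟩ := hA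
  have hs : s = 1 ∨ s = -1 := by
    have := h i₀ hi₀
    rcases hγ.eq_one_or_eq_neg_one hi₀ with h1 | h1 <;>
      rcases hε.eq_one_or_eq_neg_one hi₀ with h2 | h2 <;> rw [h1, h2] at this <;>
      first | (left; linarith) | (right; linarith)
  rcases hs with rfl | rfl
  · left
    funext i
    by_cases hi : i ∈ A
    · simpa using h i hi
    · rw [hγ.eq_one_of_notMem hi, hε.eq_one_of_notMem hi]
  · right
    funext i
    by_cases hi : i ∈ A
    · simpa [negOn, hi] using h i hi
    · simp [negOn, hi, hγ.eq_one_of_notMem hi]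

end IsSign

lemma isSign_negOn (h : IsSign A ε) : IsSign A (negOn A ε) := by
  intro i
  by_cases hi : i ∈ A
  · rcases h.eq_one_or_eq_neg_one hi with h1 | h1 <;> simp [negOn, hi, h1]
  · simp [negOn, hi]

lemma uvec_apply (A : Finset (Fin d)) (ε : Fin d → ℝ) (k : Fin d) :
    uvec A ε k = (√A.card)⁻¹ * if k ∈ A then ε k else 0 := by
  simp [uvec, Finset.sum_apply, Pi.single_apply, mul_ite]

lemma IsSign.uvec_apply_ne_zero_iff (h : IsSign A ε) {k : Fin d} :
    uvec A ε k ≠ 0 ↔ k ∈ A := by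
  by_cases hk : k ∈ A
  · have : (0 : ℝ) < A.card := by exact_mod_cast Finset.card_pos.2 ⟨k, hk⟩
    simp [uvec_apply, hk, h.ne_zero hk, this.ne']
  · simp [uvec_apply, hk]

lemma uvec_negOn (A : Finset (Fin d)) (ε : Fin d → ℝ) : uvec A (negOn A ε) = -uvec A ε := by
  ext k
  by_cases hk : k ∈ A <;> simp [uvec_apply, negOn, hk]

lemma Wspan_comm (A B : Finset (Fin d)) (ε δ : Fin d → ℝ) : Wspan B A δ ε = Wspan A B ε δ := by
  rw [Wspan, Wspan, Set.pair_comm]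

lemma Wspan_negOn_left (A B : Finset (Fin d)) (ε δ : Fin d → ℝ) :
    Wspan A B (negOn A ε) δ = Wspan A B ε δ := by
  rw [Wspan, Wspan, uvec_negOn, Submodule.span_insert, Submodule.span_insert,
    ← Set.neg_singleton, Submodule.span_neg]

lemma Wspan_negOn_right (A B : Finset (Fin d)) (ε δ : Fin d → ℝ) :
    Wspan A B ε (negOn B δ) = Wspan A B ε δ := by
  rw [← Wspan_comm, Wspan_negOn_left, Wspan_comm]

lemma IsSign.eq_and_mem_of_uvec_eq_smul (hγ : IsSign C γ) (hε : IsSign A ε) (hC : C.Nonempty)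
    {s : ℝ} (h : uvec C γ = s • uvec A ε) : C = A ∧ γ ∈ ({ε, negOn A ε} : Set _) := by
  have h_apply (k : Fin d) : uvec C γ k = s * uvec A ε k := by simp [h]
  have hsupp (k : Fin d) : k ∈ C ↔ s ≠ 0 ∧ k ∈ A := by
    rw [← hγ.uvec_apply_ne_zero_iff, h_apply, ← hε.uvec_apply_ne_zero_iff, mul_ne_zero_iff]
  obtain ⟨i, hi⟩ := hC
  have hs : s ≠ 0 := ((hsupp i).1 hi).1
  obtain rfl : C = A := by ext k; rw [hsupp, and_iff_right hs]
  have hc : (√(C.card : ℝ))⁻¹ ≠ 0 :=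
    inv_ne_zero (Real.sqrt_ne_zero'.2 (by exact_mod_cast Finset.card_pos.2 ⟨i, hi⟩))
  refine ⟨rfl, hγ.eq_or_eq_negOn_of_forall_eq_mul hε ⟨i, hi⟩ (s := s) fun k hk => ?_⟩
  have := h_apply k
  rw [uvec_apply, uvec_apply, if_pos hk, if_pos hk] at this
  exact mul_left_cancel₀ hc (by linear_combination this)

theorem eq_and_mem_of_uvec_mem_Wspan (hAB : Disjoint A B) (hε : IsSign A ε) (hδ : IsSign B δ)
    (hγ : IsSign C γ) (hC : C.Nonempty) (hcard : C.card < A.card + B.card)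
    (hmem : uvec C γ ∈ Wspan A B ε δ) :
    (C = A ∧ γ ∈ ({ε, negOn A ε} : Set _)) ∨ (C = B ∧ γ ∈ ({δ, negOn B δ} : Set _)) := by
  obtain ⟨s, t, hst⟩ := Submodule.mem_span_pair.1 hmem
  have hst_apply (k : Fin d) : uvec C γ k = s * uvec A ε k + t * uvec B δ k := by simp [← hst]
  have hzero : t = 0 ∨ s = 0 := by
    by_contra! hts
    have hsub : A ∪ B ⊆ C := by
      intro k hk
      rw [← hγ.uvec_apply_ne_zero_iff, hst_apply]
      rcases Finset.mem_union.1 hk with hkA | hkB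
      · have hkB : uvec B δ k = 0 := by simp [uvec_apply, Finset.disjoint_left.1 hAB hkA]
        rw [hkB, mul_zero, add_zero]
        exact mul_ne_zero hts.2 (hε.uvec_apply_ne_zero_iff.2 hkA)
      · have hkA : uvec A ε k = 0 := by simp [uvec_apply, Finset.disjoint_right.1 hAB hkB]
        rw [hkA, mul_zero, zero_add]
        exact mul_ne_zero hts.1 (hδ.uvec_apply_ne_zero_iff.2 hkB)
    have := Finset.card_le_card hsub
    rw [Finset.card_union_of_disjoint hAB] at this
    omega
  rcases hzero with rfl | rfl
  · exact .inl (hγ.eq_and_mem_of_uvec_eq_smul hε hC (by simpa using hst.symm))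
  · exact .inr (hγ.eq_and_mem_of_uvec_eq_smul hδ hC (by simpa using hst.symm))

lemma IsIndex.swap {a b : ℕ} (h : IsIndex d a b A B ε δ) : IsIndex d b a B A δ ε :=
  ⟨h.1.symm, h.2.2.1, h.2.1, h.2.2.2.2, h.2.2.2.1⟩

lemma signFlips_subset_fiber {a b : ℕ} (h : IsIndex d a b A B ε δ) :
    signFlips A B ε δ ⊆ fiber d a b (Wspan A B ε δ) := by
  obtain ⟨hAB, hA, hB, hε, hδ⟩ := h
  rintro ⟨A', B', ε', δ'⟩ hq
  simp only [signFlips, Set.mem_prod, Set.mem_singleton_iff, Set.mem_insert_iff] at hq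
  obtain ⟨rfl, rfl, rfl | rfl, rfl | rfl⟩ := hq <;>
    simp [fiber, IsIndex, Wspan_negOn_left, Wspan_negOn_right, isSign_negOn, *]

lemma fiber_subset_signFlips_union {a b : ℕ} (h : IsIndex d a b A B ε δ) (ha : 1 ≤ a)
    (hab : a ≤ b) : fiber d a b (Wspan A B ε δ) ⊆ signFlips A B ε δ ∪ signFlips B A δ ε := by
  obtain ⟨hAB, hA, hB, hε, hδ⟩ := h
  intro q ⟨⟨hAB', hA', hB', hε', hδ'⟩, hW⟩
  have hA'ne : q.1.Nonempty := Finset.card_pos.1 (by omega)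
  have hB'ne : q.2.1.Nonempty := Finset.card_pos.1 (by omega)
  have hu : uvec q.1 q.2.2.1 ∈ Wspan A B ε δ := hW ▸ Submodule.subset_span (by simp)
  have hv : uvec q.2.1 q.2.2.2 ∈ Wspan A B ε δ := hW ▸ Submodule.subset_span (by simp)
  have hne : q.1 ≠ q.2.1 := fun heq => by simp [heq, hB'ne.ne_empty] at hAB'
  rcases eq_and_mem_of_uvec_mem_Wspan hAB hε hδ hε' hA'ne (by omega) hu with
    ⟨hqA, hε''⟩ | ⟨hqB, hε''⟩ <;>
  rcases eq_and_mem_of_uvec_mem_Wspan hAB hε hδ hδ' hB'ne (by omega) hv with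
    ⟨hqA', hδ''⟩ | ⟨hqB', hδ''⟩
  · exact absurd (hqA.trans hqA'.symm) hne
  · exact .inl ⟨hqA, hqB', hε'', hδ''⟩
  · exact .inr ⟨hqB, hqA', hε'', hδ''⟩
  · exact absurd (hqB.trans hqB'.symm) hne

lemma ncard_signFlips (hε : IsSign A ε) (hδ : IsSign B δ) (hA : A.Nonempty) (hB : B.Nonempty) :
    (signFlips A B ε δ).ncard = 4 := by
  simp [signFlips, Set.ncard_pair (hε.ne_negOn hA), Set.ncard_pair (hδ.ne_negOn hB)]

lemma ncard_fiber_of_lt {a b : ℕ} (h : IsIndex d a b A B ε δ) (ha : 1 ≤ a) (hab : a < b) :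
    (fiber d a b (Wspan A B ε δ)).ncard = 4 := by
  have ⟨_, hA, hB, hε, hδ⟩ := h
  have hfiber : fiber d a b (Wspan A B ε δ) = signFlips A B ε δ := by
    refine Set.Subset.antisymm (fun q hq => ?_) (signFlips_subset_fiber h)
    refine (fiber_subset_signFlips_union h ha hab.le hq).resolve_right fun hq' => ?_
    have : q.1.card = a := hq.1.2.1
    rw [hq'.1, hB] at this
    omega
  rw [hfiber, ncard_signFlips hε hδ (Finset.card_pos.1 (by omega)) (Finset.card_pos.1 (by omega))]

lemma ncard_fiber_of_eq {a : ℕ} (h : IsIndex d a a A B ε δ) (ha : 1 ≤ a) :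
    (fiber d a a (Wspan A B ε δ)).ncard = 8 := by
  have ⟨hAB, hA, hB, hε, hδ⟩ := h
  have hAne : A.Nonempty := Finset.card_pos.1 (by omega)
  have hBne : B.Nonempty := Finset.card_pos.1 (by omega)
  have hfiber : fiber d a a (Wspan A B ε δ) = signFlips A B ε δ ∪ signFlips B A δ ε := by
    refine Set.Subset.antisymm (fiber_subset_signFlips_union h ha le_rfl)
      (Set.union_subset (signFlips_subset_fiber h) ?_)
    rw [← Wspan_comm]
    exact signFlips_subset_fiber h.swap
  have hdisj : Disjoint (signFlips A B ε δ) (signFlips B A δ ε) := by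
    refine Set.disjoint_left.2 fun q hq hq' => ?_
    have hAB' : A = B := (hq.1 : q.1 = A).symm.trans hq'.1
    simp [hAB', hBne.ne_empty] at hAB
  have h₁ := ncard_signFlips hε hδ hAne hBne
  have h₂ := ncard_signFlips hδ hε hBne hAne
  rw [hfiber, Set.ncard_union_eq hdisj (Set.finite_of_ncard_pos (by omega))
    (Set.finite_of_ncard_pos (by omega)), h₁, h₂]

end

theorem stmt7_general (d a b : ℕ) (ha : 1 ≤ a) (hab : a ≤ b)
    (W : Submodule ℝ (EuclideanSpace ℝ (Fin d))) (hW : W ∈ orbitSet d a b) :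
    Nat.card {q : Finset (Fin d) × Finset (Fin d) × (Fin d → ℝ) × (Fin d → ℝ) //
        IsIndex d a b q.1 q.2.1 q.2.2.1 q.2.2.2 ∧
          Wspan q.1 q.2.1 q.2.2.1 q.2.2.2 = W} =
      if a < b then 4 else 8 := by
  obtain ⟨A, B, ε, δ, h, rfl⟩ := hW
  refine (Nat.card_coe_set_eq (fiber d a b (Wspan A B ε δ))).trans ?_
  rcases hab.lt_or_eq with hlt | rfl
  · rw [if_pos hlt, ncard_fiber_of_lt h ha hlt]
  · rw [if_neg (lt_irrefl a), ncard_fiber_of_eq h ha]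

/-- for every `W ∈ O^{(d)}_{a,b}`, the number of tuples
`τ = (A, B, ε, δ) ∈ T^{(d)}_{a,b}` with `W_τ = W` is `4` if `a < b` and `8` if
`a = b`. -/
theorem stmt7 (d a b : ℕ) (hd : 0 < d) (ha : 1 ≤ a) (hab : a ≤ b) (habd : a + b ≤ d)
    (W : Submodule ℝ (EuclideanSpace ℝ (Fin d))) (hW : W ∈ orbitSet d a b) :
    Nat.card {q : Finset (Fin d) × Finset (Fin d) × (Fin d → ℝ) × (Fin d → ℝ) //
        IsIndex d a b q.1 q.2.1 q.2.2.1 q.2.2.2 ∧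
          Wspan q.1 q.2.1 q.2.2.1 q.2.2.2 = W} =
      if a < b then 4 else 8 :=
  stmt7_general d a b ha hab W hW
end

section
/- Let d ≥ 4 and let X = {V_1, …, V_N} be a family of N ≥ 2 pairwise distinct 2-dimensional linear subspaces of ℝ^d that is equi-chordal and is an equal-weight tight 2-fusion frame. Then 4N = d^2 if and only if X is equi-isoclinic, i.e. there exists y ∈ [0,1] such that tr(P_{V_i}P_{V_j}) = 2y and tr((P_{V_i}P_{V_j})^2) = 2y^2 for all i ≠ j. -/
open scoped BigOperators

/-- `tr(P_V P_W)`. -/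
noncomputable def trP {d : ℕ} (V W : Submodule ℝ (EuclideanSpace ℝ (Fin d))) : ℝ :=
  LinearMap.trace ℝ (EuclideanSpace ℝ (Fin d)) (proj V ∘ₗ proj W)

/-- `tr((P_V P_W)²)`. -/
noncomputable def trP2 {d : ℕ} (V W : Submodule ℝ (EuclideanSpace ℝ (Fin d))) : ℝ :=
  LinearMap.trace ℝ (EuclideanSpace ℝ (Fin d)) ((proj V ∘ₗ proj W) ∘ₗ (proj V ∘ₗ proj W))

/-!
Polarizing the quartic identity `∑ᵢ ⟪x, Pᵢ x⟫² = A ‖x‖⁴` and contracting it against orthonormal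
bases gives three frame identities for `N` planes in `ℝ^d`: `8N = A d (d + 2)`, every column sum
`∑ᵢ tr(PᵢPⱼ)` equals `A (d + 2) / 2`, and `∑ᵢ (tr(PᵢPⱼ)² + 2 tr((PᵢPⱼ)²)) = 8A`.
The defect `2 tr((PᵢPⱼ)²) - tr(PᵢPⱼ)²` is `(cos² θ₁ - cos² θ₂)²` for the principal angles of
`Vᵢ, Vⱼ`, so it is nonnegative and vanishes exactly for isoclinic pairs. When `tr(PᵢPⱼ) = c`
off the diagonal, each column sum of defects equals `8A - 8 - 2(N - 1)c²`, and the first two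
identities rewrite this as `8(d - 2)N(4N - d²) / ((N - 1)d²(d + 2))`.
-/

open scoped RealInnerProductSpace

theorem Fintype.sum_eq_add_mul_of_ne {ι R : Type*} [Fintype ι] [DecidableEq ι] [Ring R]
    {f : ι → R} {j : ι} {c : R} (h : ∀ i, i ≠ j → f i = c) :
    ∑ i, f i = f j + (Fintype.card ι - 1) * c := by
  rw [← Finset.add_sum_erase _ _ (Finset.mem_univ j),
    Finset.sum_congr rfl fun i hi => h i (Finset.ne_of_mem_erase hi), Finset.sum_const,
    Finset.card_erase_of_mem (Finset.mem_univ j), Finset.card_univ, nsmul_eq_mul,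
    Nat.cast_pred (Fintype.card_pos_iff.mpr ⟨j⟩)]

theorem defect_eq_zero_iff_four_mul_eq_sq {N d A c : ℝ} (hN : 1 < N) (hd : 2 < d)
    (hframe : 8 * N = A * d * (d + 2)) (hcol : 2 * (2 + (N - 1) * c) = A * (d + 2)) :
    8 * A - 8 - 2 * (N - 1) * c ^ 2 = 0 ↔ 4 * N = d ^ 2 := by
  have hc : (N - 1) * c * d = 4 * N - 2 * d := by linear_combination d * hcol / 2 - hframe / 2
  have key : (N - 1) * d ^ 2 * (d + 2) * (8 * A - 8 - 2 * (N - 1) * c ^ 2) =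
      8 * (d - 2) * N * (4 * N - d ^ 2) := by
    linear_combination (-8 * (N - 1) * d) * hframe
      - (2 * (d + 2) * ((N - 1) * c * d + 4 * N - 2 * d)) * hc
  have hne : (N - 1) * d ^ 2 * (d + 2) ≠ 0 := by
    have : 0 < N - 1 := by linarith
    positivity
  have hne' : 8 * (d - 2) * N ≠ 0 := by
    have : 0 < d - 2 := by linarith
    have : 0 < N := by linarith
    positivity
  rw [← mul_right_inj' hne, key, mul_zero, mul_eq_zero_iff_left hne', sub_eq_zero]

section

variable {E : Type*} [NormedAddCommGroup E] [InnerProductSpace ℝ E]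

local notation "𝐏" K:max => (Submodule.starProjection K : E →ₗ[ℝ] E)

theorem LinearMap.IsSymmetric.sum_inner_polarization {ι : Type*} [Fintype ι]
    {T : ι → E →ₗ[ℝ] E} (hT : ∀ i, (T i).IsSymmetric) {A : ℝ}
    (h : ∀ x, ∑ i, ⟪x, T i x⟫ ^ 2 = A * ‖x‖ ^ 4) (x y : E) :
    ∑ i, (⟪x, T i x⟫ * ⟪y, T i y⟫ + 2 * ⟪x, T i y⟫ ^ 2) =
      A * (‖x‖ ^ 2 * ‖y‖ ^ 2 + 2 * ⟪x, y⟫ ^ 2) := by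
  have hsymm : ∀ i, ⟪y, T i x⟫ = ⟪x, T i y⟫ := fun i => by rw [real_inner_comm, hT i]
  have hplus : ∀ i, ⟪x + y, T i (x + y)⟫ = ⟪x, T i x⟫ + 2 * ⟪x, T i y⟫ + ⟪y, T i y⟫ := fun i => by
    rw [map_add, inner_add_left, inner_add_right, inner_add_right, hsymm]; ring
  have hminus : ∀ i, ⟪x - y, T i (x - y)⟫ = ⟪x, T i x⟫ - 2 * ⟪x, T i y⟫ + ⟪y, T i y⟫ := fun i => by
    rw [map_sub, inner_sub_left, inner_sub_right, inner_sub_right, hsymm]; ring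
  -- `(a + 2b + c)² + (a - 2b + c)² - 2a² - 2c² = 4(ac + 2b²)`, for `T i` and for the identity
  have hsum : 4 * ∑ i, (⟪x, T i x⟫ * ⟪y, T i y⟫ + 2 * ⟪x, T i y⟫ ^ 2) =
      ∑ i, ⟪x + y, T i (x + y)⟫ ^ 2 + ∑ i, ⟪x - y, T i (x - y)⟫ ^ 2
        - 2 * ∑ i, ⟪x, T i x⟫ ^ 2 - 2 * ∑ i, ⟪y, T i y⟫ ^ 2 := by
    simp only [Finset.mul_sum, ← Finset.sum_add_distrib, ← Finset.sum_sub_distrib, hplus, hminus]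
    exact Finset.sum_congr rfl fun i _ => by ring
  simp only [h, show ∀ z : E, ‖z‖ ^ 4 = (‖z‖ ^ 2) ^ 2 from fun z => by ring,
    norm_add_sq_real, norm_sub_sq_real] at hsum
  linear_combination hsum / 4

theorem Submodule.starProjection_starProjection (K : Submodule ℝ E) [K.HasOrthogonalProjection]
    (x : E) : K.starProjection (K.starProjection x) = K.starProjection x :=
  K.starProjection_eq_self_iff.mpr (K.starProjection_apply_mem x)

theorem Submodule.inner_starProjection_self (K : Submodule ℝ E) [K.HasOrthogonalProjection]
    (x : E) : ⟪x, K.starProjection x⟫ = ‖K.starProjection x‖ ^ 2 := by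
  rw [← K.starProjection_starProjection, ← K.inner_starProjection_left_eq_right,
    K.starProjection_starProjection, real_inner_self_eq_norm_sq]

theorem OrthonormalBasis.inner_starProjection_self {ι : Type*} [Fintype ι] {K : Submodule ℝ E}
    [K.HasOrthogonalProjection] (b : OrthonormalBasis ι ℝ K) (x : E) :
    ⟪x, K.starProjection x⟫ = ∑ k, ⟪(b k : E), x⟫ ^ 2 := by
  rw [K.inner_starProjection_self, K.starProjection_apply, Submodule.norm_coe,
    ← b.sum_sq_inner_right]
  refine Finset.sum_congr rfl fun k _ => ?_
  rw [Submodule.coe_inner, ← K.starProjection_apply, ← K.inner_starProjection_left_eq_right,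
    K.starProjection_eq_self_iff.mpr (b k).2]

variable [FiniteDimensional ℝ E] {ι : Type*} [Fintype ι]

theorem trace_comp_starProjection (T : E →ₗ[ℝ] E) (W : Submodule ℝ E)
    (b : OrthonormalBasis ι ℝ W) :
    LinearMap.trace ℝ E (T ∘ₗ 𝐏 W) = ∑ k, ⟪(b k : E), T (b k)⟫ := by
  rw [show 𝐏 W = W.subtype ∘ₗ (W.orthogonalProjectionOnto : E →ₗ[ℝ] W) from rfl,
    ← LinearMap.comp_assoc, LinearMap.trace_comp_comm', LinearMap.trace_eq_sum_inner _ b]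
  simp

theorem trace_starProjection (W : Submodule ℝ E) :
    LinearMap.trace ℝ E (𝐏 W) = Module.finrank ℝ W := by
  simpa [Submodule.norm_coe, OrthonormalBasis.norm_eq_one] using
    trace_comp_starProjection LinearMap.id W (stdOrthonormalBasis ℝ W)

theorem OrthonormalBasis.sum_inner_starProjection_eq_finrank (W : Submodule ℝ E)
    (e : OrthonormalBasis ι ℝ E) :
    ∑ m, ⟪e m, W.starProjection (e m)⟫ = Module.finrank ℝ W := by
  rw [← trace_starProjection, LinearMap.trace_eq_sum_inner _ e]
  rfl

theorem starProjection_comp_self (W : Submodule ℝ E) : 𝐏 W ∘ₗ 𝐏 W = 𝐏 W :=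
  LinearMap.ext W.starProjection_starProjection

theorem trace_sq_starProjection_comp_starProjection (V W : Submodule ℝ E)
    (b : OrthonormalBasis ι ℝ W) :
    LinearMap.trace ℝ E ((𝐏 V ∘ₗ 𝐏 W) ∘ₗ (𝐏 V ∘ₗ 𝐏 W)) =
      ∑ k, ∑ l, ⟪(b k : E), V.starProjection (b l)⟫ ^ 2 := by
  rw [← LinearMap.comp_assoc, trace_comp_starProjection _ W b]
  refine Finset.sum_congr rfl fun k _ => ?_
  simp only [LinearMap.comp_apply, ContinuousLinearMap.coe_coe,
    ← V.inner_starProjection_left_eq_right, b.inner_starProjection_self]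
  refine Finset.sum_congr rfl fun l _ => ?_
  rw [real_inner_comm, V.inner_starProjection_left_eq_right]

theorem sq_trace_starProjection_comp_le (V W : Submodule ℝ E) :
    LinearMap.trace ℝ E (𝐏 V ∘ₗ 𝐏 W) ^ 2 ≤
      Module.finrank ℝ W * LinearMap.trace ℝ E ((𝐏 V ∘ₗ 𝐏 W) ∘ₗ (𝐏 V ∘ₗ 𝐏 W)) := by
  set b := stdOrthonormalBasis ℝ W
  rw [trace_comp_starProjection _ W b, trace_sq_starProjection_comp_starProjection V W b]
  calc (∑ k, ⟪(b k : E), V.starProjection (b k)⟫) ^ 2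
      ≤ Module.finrank ℝ W * ∑ k, ⟪(b k : E), V.starProjection (b k)⟫ ^ 2 := by
        simpa using sq_sum_le_card_mul_sum_sq (s := Finset.univ)
          (f := fun k => ⟪(b k : E), V.starProjection (b k)⟫)
    _ ≤ _ := by
        gcongr with k
        exact Finset.single_le_sum (f := fun l => ⟪(b k : E), V.starProjection (b l)⟫ ^ 2)
          (fun _ _ => sq_nonneg _) (Finset.mem_univ k)

theorem trace_starProjection_comp_mem_Icc (V W : Submodule ℝ E) :
    LinearMap.trace ℝ E (𝐏 V ∘ₗ 𝐏 W) ∈ Set.Icc 0 (Module.finrank ℝ W : ℝ) := by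
  set b := stdOrthonormalBasis ℝ W
  rw [trace_comp_starProjection _ W b]
  have hdiag : ∀ k, ⟪(b k : E), V.starProjection (b k)⟫ ∈ Set.Icc (0 : ℝ) 1 := fun k => by
    rw [V.inner_starProjection_self, Set.mem_Icc]
    refine ⟨sq_nonneg _, ?_⟩
    have := V.norm_starProjection_apply_le (b k)
    rw [Submodule.norm_coe, b.norm_eq_one] at this
    nlinarith [norm_nonneg (V.starProjection (b k : E))]
  constructor
  · exact Finset.sum_nonneg fun k _ => (hdiag k).1
  · simpa using Finset.sum_le_sum fun k (_ : k ∈ Finset.univ) => (hdiag k).2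

section TightFusionFrame

variable {V : ι → Submodule ℝ E} {A : ℝ}
  (htight : ∀ x, ∑ i, ‖(V i).starProjection x‖ ^ 4 = A * ‖x‖ ^ 4)
include htight

theorem sum_inner_polarization_of_tight (x y : E) :
    ∑ i, (⟪x, (V i).starProjection x⟫ * ⟪y, (V i).starProjection y⟫ +
        2 * ⟪x, (V i).starProjection y⟫ ^ 2) =
      A * (‖x‖ ^ 2 * ‖y‖ ^ 2 + 2 * ⟪x, y⟫ ^ 2) :=
  LinearMap.IsSymmetric.sum_inner_polarization (T := fun i => 𝐏 (V i))
    (fun i => (V i).starProjection_isSymmetric)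
    (fun x => by
      simp only [ContinuousLinearMap.coe_coe, Submodule.inner_starProjection_self, ← pow_mul]
      exact htight x) x y

section

variable {k : ℕ} (hdim : ∀ i, Module.finrank ℝ (V i) = k)
include hdim

theorem sum_inner_starProjection_self_of_tight (x : E) :
    (k + 2) * ∑ i, ⟪x, (V i).starProjection x⟫ = A * (Module.finrank ℝ E + 2) * ‖x‖ ^ 2 := by
  set e := stdOrthonormalBasis ℝ E
  have h := Finset.sum_congr rfl fun m (_ : m ∈ Finset.univ) =>
    sum_inner_polarization_of_tight htight x (e m)
  have hparseval : ∀ i, ∑ m, ⟪x, (V i).starProjection (e m)⟫ ^ 2 = ⟪x, (V i).starProjection x⟫ :=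
    fun i => by
      rw [Submodule.inner_starProjection_self, ← e.sum_sq_inner_left]
      simp_rw [(V i).inner_starProjection_left_eq_right]
  rw [Finset.sum_comm] at h
  simp only [Finset.sum_add_distrib, ← Finset.mul_sum, ← Finset.sum_mul, hparseval,
    e.sum_inner_starProjection_eq_finrank, hdim, e.norm_eq_one, e.sum_sq_inner_left,
    Finset.sum_const, Finset.card_univ, Fintype.card_fin, nsmul_eq_mul, one_pow, mul_one] at h
  linear_combination h

theorem card_mul_eq_of_tight :
    k * (k + 2) * Fintype.card ι = A * Module.finrank ℝ E * (Module.finrank ℝ E + 2) := by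
  set e := stdOrthonormalBasis ℝ E
  have h := Finset.sum_congr rfl fun m (_ : m ∈ Finset.univ) =>
    sum_inner_starProjection_self_of_tight htight hdim (e m)
  rw [← Finset.mul_sum, Finset.sum_comm] at h
  simp only [e.sum_inner_starProjection_eq_finrank, hdim, e.norm_eq_one, Finset.sum_const,
    Finset.card_univ, Fintype.card_fin, nsmul_eq_mul, one_pow, mul_one] at h
  linear_combination h

theorem sum_trace_starProjection_comp_of_tight (j : ι) :
    (k + 2) * ∑ i, LinearMap.trace ℝ E (𝐏 (V i) ∘ₗ 𝐏 (V j)) = A * (Module.finrank ℝ E + 2) * k := by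
  set b := stdOrthonormalBasis ℝ (V j)
  simp only [trace_comp_starProjection _ _ b]
  rw [Finset.sum_comm, Finset.mul_sum]
  simp only [ContinuousLinearMap.coe_coe, sum_inner_starProjection_self_of_tight htight hdim,
    Submodule.norm_coe, b.norm_eq_one, one_pow, mul_one, Finset.sum_const, Finset.card_univ,
    Fintype.card_fin, nsmul_eq_mul, hdim j]
  ring

theorem sum_sq_trace_add_two_mul_trace_sq_of_tight (j : ι) :
    ∑ i, (LinearMap.trace ℝ E (𝐏 (V i) ∘ₗ 𝐏 (V j)) ^ 2 +
        2 * LinearMap.trace ℝ E ((𝐏 (V i) ∘ₗ 𝐏 (V j)) ∘ₗ (𝐏 (V i) ∘ₗ 𝐏 (V j)))) =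
      A * k * (k + 2) := by
  classical
  set b := stdOrthonormalBasis ℝ (V j)
  have hgram : ∀ i, LinearMap.trace ℝ E (𝐏 (V i) ∘ₗ 𝐏 (V j)) ^ 2 +
        2 * LinearMap.trace ℝ E ((𝐏 (V i) ∘ₗ 𝐏 (V j)) ∘ₗ (𝐏 (V i) ∘ₗ 𝐏 (V j))) =
      ∑ l, ∑ m, (⟪(b l : E), (V i).starProjection (b l)⟫ * ⟪(b m : E), (V i).starProjection (b m)⟫
        + 2 * ⟪(b l : E), (V i).starProjection (b m)⟫ ^ 2) := fun i => by
    rw [trace_comp_starProjection _ _ b, trace_sq_starProjection_comp_starProjection _ _ b, sq,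
      Finset.sum_mul_sum, Finset.mul_sum]
    simp only [Finset.mul_sum, ← Finset.sum_add_distrib, ContinuousLinearMap.coe_coe]
  rw [Finset.sum_congr rfl fun i _ => hgram i, Finset.sum_comm]
  rw [Finset.sum_congr rfl fun l _ => Finset.sum_comm]
  simp only [sum_inner_polarization_of_tight htight, Submodule.norm_coe, b.norm_eq_one,
    ← Submodule.coe_inner, b.inner_eq_ite]
  simp [mul_add, Finset.sum_add_distrib, hdim j]
  ring

end

theorem sum_two_mul_trace_sq_sub_sq_of_tight (hdim : ∀ i, Module.finrank ℝ (V i) = 2) {c : ℝ}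
    (hc : ∀ i j, i ≠ j → LinearMap.trace ℝ E (𝐏 (V i) ∘ₗ 𝐏 (V j)) = c) (j : ι) :
    ∑ i, (2 * LinearMap.trace ℝ E ((𝐏 (V i) ∘ₗ 𝐏 (V j)) ∘ₗ (𝐏 (V i) ∘ₗ 𝐏 (V j))) -
        LinearMap.trace ℝ E (𝐏 (V i) ∘ₗ 𝐏 (V j)) ^ 2) =
      8 * A - 8 - 2 * (Fintype.card ι - 1) * c ^ 2 := by
  classical
  have hquad := sum_sq_trace_add_two_mul_trace_sq_of_tight htight hdim j
  have hsq : ∑ i, LinearMap.trace ℝ E (𝐏 (V i) ∘ₗ 𝐏 (V j)) ^ 2 =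
      2 ^ 2 + (Fintype.card ι - 1) * c ^ 2 := by
    rw [Fintype.sum_eq_add_mul_of_ne fun i hi => by rw [hc i j hi], starProjection_comp_self,
      trace_starProjection, hdim j]
    norm_num
  rw [Finset.sum_add_distrib] at hquad
  rw [Finset.sum_sub_distrib]
  push_cast at hquad
  linear_combination hquad - 2 * hsq

theorem four_mul_card_eq_sq_iff_of_tight (hn : 2 < Module.finrank ℝ E)
    (hN : 1 < Fintype.card ι) (hdim : ∀ i, Module.finrank ℝ (V i) = 2) {c : ℝ}
    (hc : ∀ i j, i ≠ j → LinearMap.trace ℝ E (𝐏 (V i) ∘ₗ 𝐏 (V j)) = c) :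
    4 * Fintype.card ι = Module.finrank ℝ E ^ 2 ↔ ∀ i j, i ≠ j →
      2 * LinearMap.trace ℝ E ((𝐏 (V i) ∘ₗ 𝐏 (V j)) ∘ₗ (𝐏 (V i) ∘ₗ 𝐏 (V j))) =
        LinearMap.trace ℝ E (𝐏 (V i) ∘ₗ 𝐏 (V j)) ^ 2 := by
  classical
  obtain ⟨j₀⟩ : Nonempty ι := Fintype.card_pos_iff.mp (by omega)
  have hframe : 8 * (Fintype.card ι : ℝ) =
      A * Module.finrank ℝ E * (Module.finrank ℝ E + 2) := by
    have := card_mul_eq_of_tight htight hdim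
    push_cast at this
    linarith
  have hcol : 2 * (2 + (Fintype.card ι - 1) * c) = A * (Module.finrank ℝ E + 2) := by
    have := sum_trace_starProjection_comp_of_tight htight hdim j₀
    rw [Fintype.sum_eq_add_mul_of_ne (hc · j₀), starProjection_comp_self, trace_starProjection,
      hdim] at this
    push_cast at this
    linarith
  have hdefect := sum_two_mul_trace_sq_sub_sq_of_tight htight hdim hc
  rw [← Nat.cast_inj (R := ℝ)]
  push_cast
  rw [← defect_eq_zero_iff_four_mul_eq_sq (by exact_mod_cast hN) (by exact_mod_cast hn) hframe hcol]
  constructor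
  · intro hS i j _
    rw [← hdefect j, Finset.sum_eq_zero_iff_of_nonneg fun i _ =>
      sub_nonneg.mpr (by simpa [hdim j] using sq_trace_starProjection_comp_le (V i) (V j))] at hS
    linarith [hS i (Finset.mem_univ i)]
  · intro hiso
    rw [← hdefect j₀]
    refine Finset.sum_eq_zero fun i _ => ?_
    by_cases hi : i = j₀
    · rw [hi, starProjection_comp_self, starProjection_comp_self, trace_starProjection, hdim]
      norm_num
    · rw [hiso i j₀ hi, sub_self]

end TightFusionFrame

theorem exists_isoclinic_iff {V : ι → Submodule ℝ E} (hN : 1 < Fintype.card ι)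
    (hdim : ∀ i, Module.finrank ℝ (V i) = 2) {c : ℝ}
    (hc : ∀ i j, i ≠ j → LinearMap.trace ℝ E (𝐏 (V i) ∘ₗ 𝐏 (V j)) = c) :
    (∀ i j, i ≠ j →
      2 * LinearMap.trace ℝ E ((𝐏 (V i) ∘ₗ 𝐏 (V j)) ∘ₗ (𝐏 (V i) ∘ₗ 𝐏 (V j))) =
        LinearMap.trace ℝ E (𝐏 (V i) ∘ₗ 𝐏 (V j)) ^ 2) ↔
      ∃ y : ℝ, y ∈ Set.Icc (0 : ℝ) 1 ∧ ∀ i j, i ≠ j →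
        LinearMap.trace ℝ E (𝐏 (V i) ∘ₗ 𝐏 (V j)) = 2 * y ∧
          LinearMap.trace ℝ E ((𝐏 (V i) ∘ₗ 𝐏 (V j)) ∘ₗ (𝐏 (V i) ∘ₗ 𝐏 (V j))) = 2 * y ^ 2 := by
  obtain ⟨i₀, j₀, hij₀⟩ := Fintype.exists_pair_of_one_lt_card hN
  have hc₀ := trace_starProjection_comp_mem_Icc (V i₀) (V j₀)
  rw [hc i₀ j₀ hij₀, hdim, Nat.cast_ofNat] at hc₀
  constructor
  · intro h
    refine ⟨c / 2, ⟨by linarith [hc₀.1], by linarith [hc₀.2]⟩, fun i j hij => ⟨?_, ?_⟩⟩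
    · rw [hc i j hij]; ring
    · have := h i j hij
      rw [hc i j hij] at this
      linear_combination this / 2
  · rintro ⟨y, -, hy⟩ i j hij
    rw [(hy i j hij).1, (hy i j hij).2]
    ring

end

theorem stmt17_general (d N : ℕ) (hd : 4 ≤ d) (hN : 2 ≤ N)
    (V : Fin N → Submodule ℝ (EuclideanSpace ℝ (Fin d)))
    (hdim : ∀ i, Module.finrank ℝ (V i) = 2)
    (hec : ∃ c : ℝ, ∀ i j, i ≠ j → trP (V i) (V j) = c)
    (htff : ∃ A : ℝ, 0 < A ∧ ∀ x : EuclideanSpace ℝ (Fin d),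
      ∑ i, ‖proj (V i) x‖ ^ 4 = A * ‖x‖ ^ 4) :
    4 * N = d ^ 2 ↔
      ∃ y : ℝ, y ∈ Set.Icc (0 : ℝ) 1 ∧ ∀ i j, i ≠ j →
        trP (V i) (V j) = 2 * y ∧ trP2 (V i) (V j) = 2 * y ^ 2 := by
  obtain ⟨c, hc⟩ := hec
  obtain ⟨A, -, htff⟩ := htff
  have hcard : 1 < Fintype.card (Fin N) := by rw [Fintype.card_fin]; omega
  have hfin : 2 < Module.finrank ℝ (EuclideanSpace ℝ (Fin d)) := by
    rw [finrank_euclideanSpace_fin]; omega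
  have key := (four_mul_card_eq_sq_iff_of_tight htff hfin hcard hdim hc).trans
    (exists_isoclinic_iff hcard hdim hc)
  rwa [Fintype.card_fin, finrank_euclideanSpace_fin] at key

/-- for an `ECTFF₂` on `G_{2,d}` (`d ≥ 4`, `N ≥ 2` pairwise distinct
2-dimensional subspaces, equi-chordal and an equal-weight tight 2-fusion frame),
equality `4N = d²` holds iff the family is equi-isoclinic, i.e. there is
`y ∈ [0,1]` with `tr(P_{V_i}P_{V_j}) = 2y` and `tr((P_{V_i}P_{V_j})²) = 2y²` for
all `i ≠ j`. -/
theorem stmt17 (d N : ℕ) (hd : 4 ≤ d) (hN : 2 ≤ N)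
    (V : Fin N → Submodule ℝ (EuclideanSpace ℝ (Fin d)))
    (hinj : Function.Injective V)
    (hdim : ∀ i, Module.finrank ℝ (V i) = 2)
    (hec : ∃ c : ℝ, ∀ i j, i ≠ j → trP (V i) (V j) = c)
    (htff : ∃ A : ℝ, 0 < A ∧ ∀ x : EuclideanSpace ℝ (Fin d),
      ∑ i, ‖proj (V i) x‖ ^ 4 = A * ‖x‖ ^ 4) :
    4 * N = d ^ 2 ↔
      ∃ y : ℝ, y ∈ Set.Icc (0 : ℝ) 1 ∧ ∀ i j, i ≠ j →
        trP (V i) (V j) = 2 * y ∧ trP2 (V i) (V j) = 2 * y ^ 2 :=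
  stmt17_general d N hd hN V hdim hec htff
end
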